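/- Define β(x) = −(∫₀^∞ z f(z) dz)² + 2(∫₀ˣ f(z) dz)(∫₀ˣ z² f(z) dz) + 4x(∫₀ˣ f(z) dz)(∫ₓ^∞ z f(z) dz) − x²/4 + (∫ₓ^∞ z f(z) dz)² + x²(∫₀ˣ f(z) dz)². Let C be a real number satisfying (k₁ − k₂)/2 + sgn(C)(k₁ + k₂) ∫₀^{|C|} f(z) dz = 0, where sgn(c) = 1 for c ≥ 0 and sgn(c) = −1 for c < 0. Then Var[L(Z)] − Var[L(Z + C)] = (k₁ + k₂)² β(|C|). -/

import Mathlib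

/-!
Write `L w = a w + b |w|` with `a = (k₁ - k₂) / 2` and `b = (k₁ + k₂) / 2`. Since `|X|² = X²`,
`Var (a X + b |X|)` is a quadratic expression in `E X`, `E X²`, `E |X|` and `E (X |X|)`. For
`X = Z + c` these moments are explicit in `A = ∫₀ᶜ f`, `S = ∫₀ᶜ z² f` and `T = ∫_c^∞ z f`: the
identities `|w| = w + 2 (-w)⁺` and `w |w| = w² - 2 ((-w)⁺)²` and the symmetry of `f` reduce them to
the stop-loss moments `E (Z - c)⁺` and `E ((Z - c)⁺)²`, which are integrals over `(c, ∞)`.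
The constraint on `C` says `a = -2 sgn(C) b A(|C|)`, and substituting it turns the difference of
the two variances into `(k₁ + k₂)² β(|C|)`; for `C < 0` one uses that `A` and `S` are odd and `T`
is even in `c`.
-/

open MeasureTheory ProbabilityTheory Set

lemma ite_nonneg_mul_eq_mul_add_mul_abs (k₁ k₂ w : ℝ) :
    (if 0 ≤ w then k₁ * w else -k₂ * w) = (k₁ - k₂) / 2 * w + (k₁ + k₂) / 2 * |w| := by
  split_ifs with hw
  · rw [abs_of_nonneg hw]; ring
  · rw [abs_of_neg (not_le.mp hw)]; ring

lemma variance_mul_add_mul_abs {Ω : Type*} [MeasurableSpace Ω] {μ : Measure Ω}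
    [IsProbabilityMeasure μ] {X : Ω → ℝ} (hX : MemLp X 2 μ) (a b : ℝ) :
    variance (fun ω => a * X ω + b * |X ω|) μ
      = (a ^ 2 + b ^ 2) * (∫ ω, X ω ^ 2 ∂μ) + 2 * a * b * (∫ ω, X ω * |X ω| ∂μ)
        - (a * (∫ ω, X ω ∂μ) + b * ∫ ω, |X ω| ∂μ) ^ 2 := by
  have hX1 : Integrable X μ := hX.integrable one_le_two
  have hX2 : Integrable (fun ω => X ω ^ 2) μ := hX.integrable_sq
  have hXabs : Integrable (fun ω => X ω * |X ω|) μ :=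
    hX2.mono (hX1.1.mul hX1.1.norm) (ae_of_all _ fun ω => by simp [sq])
  have hY : MemLp (fun ω => a * X ω + b * |X ω|) 2 μ := (hX.const_mul a).add (hX.abs.const_mul b)
  rw [variance_eq_sub hY]
  have hsq : ∀ ω, (a * X ω + b * |X ω|) ^ 2
      = (a ^ 2 + b ^ 2) * X ω ^ 2 + 2 * a * b * (X ω * |X ω|) := fun ω => by
    rw [add_sq, mul_pow, mul_pow, sq_abs]; ring
  simp only [Pi.pow_apply, hsq]
  rw [integral_add (hX2.const_mul _) (hXabs.const_mul _), integral_add (hX1.const_mul _)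
    (hX1.abs.const_mul _), integral_const_mul, integral_const_mul, integral_const_mul,
    integral_const_mul]

section Transfer

variable {Ω : Type*} [MeasurableSpace Ω] {μ : Measure Ω} {Z : Ω → ℝ} {f : ℝ → ℝ}

lemma integral_comp_eq_integral_mul_of_map_eq_withDensity (hZ : AEMeasurable Z μ)
    (hdens : μ.map Z = volume.withDensity fun z => ENNReal.ofReal (f z)) (hf_meas : Measurable f)
    (hf_nonneg : ∀ x, 0 ≤ f x) {g : ℝ → ℝ} (hg : Measurable g) :
    ∫ ω, g (Z ω) ∂μ = ∫ z, g z * f z := by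
  rw [← integral_map hZ hg.aestronglyMeasurable, hdens, integral_withDensity_eq_integral_toReal_smul
    hf_meas.ennreal_ofReal (ae_of_all _ fun _ => ENNReal.ofReal_lt_top)]
  simp_rw [ENNReal.toReal_ofReal (hf_nonneg _), smul_eq_mul, mul_comm]

lemma integrable_comp_of_map_eq_withDensity (hZ : AEMeasurable Z μ)
    (hdens : μ.map Z = volume.withDensity fun z => ENNReal.ofReal (f z)) (hf_meas : Measurable f)
    (hf_nonneg : ∀ x, 0 ≤ f x) {g : ℝ → ℝ} (hg : Measurable g)
    (hgf : Integrable fun z => g z * f z) : Integrable (fun ω => g (Z ω)) μ := by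
  refine (integrable_map_measure hg.aestronglyMeasurable hZ).mp ?_
  rw [hdens, integrable_withDensity_iff_integrable_smul' hf_meas.ennreal_ofReal
    (ae_of_all _ fun _ => ENNReal.ofReal_lt_top)]
  simp_rw [ENNReal.toReal_ofReal (hf_nonneg _), smul_eq_mul, mul_comm (f _)]
  exact hgf

end Transfer

section EvenDensity

variable {f : ℝ → ℝ}

lemma abs_max_neg_sub_zero_le (c z : ℝ) : |max (-z - c) 0| ≤ |z + c| :=
  abs_max_le_max_abs_abs.trans <| by
    rw [abs_zero, ← neg_add', abs_neg]
    exact max_le le_rfl (abs_nonneg _)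

lemma integrable_mul_of_abs_le {g h : ℝ → ℝ} (hh : Integrable fun z => h z * f z)
    (hf : AEStronglyMeasurable f) (hg : Continuous g) (hgh : ∀ z, |g z| ≤ |h z|) :
    Integrable fun z => g z * f z :=
  hh.mono (hg.aestronglyMeasurable.mul hf) <| ae_of_all _ fun z => by
    simpa only [Real.norm_eq_abs, abs_mul] using
      mul_le_mul_of_nonneg_right (hgh z) (abs_nonneg (f z))

lemma integrable_id_mul_of_integrable_sq_mul (hf : Integrable f)
    (hf2 : Integrable fun z => z ^ 2 * f z) : Integrable fun z => z * f z := by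
  refine (hf.abs.add hf2.abs).mono (continuous_id.aestronglyMeasurable.mul hf.1) <|
    ae_of_all _ fun z => ?_
  have hz : |z| ≤ 1 + z ^ 2 := by nlinarith [sq_abs z, sq_nonneg (|z| - 1)]
  simp only [Real.norm_eq_abs, abs_mul, Pi.add_apply, abs_pow, sq_abs]
  rw [abs_of_nonneg (by positivity : 0 ≤ |f z| + z ^ 2 * |f z|)]
  nlinarith [abs_nonneg (f z)]

lemma integrable_add_mul (hf : Integrable f) (hf2 : Integrable fun z => z ^ 2 * f z) (c : ℝ) :
    Integrable fun z => (z + c) * f z := by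
  simpa only [add_mul] using
    (integrable_id_mul_of_integrable_sq_mul hf hf2).fun_add (hf.const_mul c)

lemma integrable_add_sq_mul (hf : Integrable f) (hf2 : Integrable fun z => z ^ 2 * f z) (c : ℝ) :
    Integrable fun z => (z + c) ^ 2 * f z := by
  have hzf := integrable_id_mul_of_integrable_sq_mul hf hf2
  refine ((hf2.fun_add (hzf.const_mul (2 * c))).fun_add (hf.const_mul (c ^ 2))).congr <|
    ae_of_all _ fun z => ?_
  ring

lemma integral_comp_neg_mul_of_even (hf_symm : ∀ x, f (-x) = f x) (g : ℝ → ℝ) :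
    ∫ z, g (-z) * f z = ∫ z, g z * f z := by
  simpa only [hf_symm] using integral_neg_eq_self (fun z => g z * f z) volume

lemma integral_id_mul_eq_zero_of_even (hf_symm : ∀ x, f (-x) = f x) : ∫ z, z * f z = 0 := by
  have h := integral_comp_neg_mul_of_even hf_symm id
  simp only [id, neg_mul, integral_neg] at h
  linarith

lemma integral_Ioi_eq_half_sub_of_even {g : ℝ → ℝ} (hg_symm : ∀ x, g (-x) = g x)
    (hg : Integrable g) (c : ℝ) :
    ∫ z in Ioi c, g z = (∫ z, g z) / 2 - ∫ z in (0 : ℝ)..c, g z := by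
  have habs : (fun z => g |z|) = g := funext fun z => by
    rcases le_total 0 z with hz | hz
    · rw [abs_of_nonneg hz]
    · rw [abs_of_nonpos hz, hg_symm]
  have hhalf := integral_comp_abs (f := g)
  rw [habs] at hhalf
  have hsplit := intervalIntegral.integral_interval_add_Ioi hg.integrableOn hg.integrableOn
    (a := 0) (b := c)
  linarith

lemma intervalIntegral_zero_neg_of_even {g : ℝ → ℝ} (hg_symm : ∀ x, g (-x) = g x) (c : ℝ) :
    ∫ z in (0 : ℝ)..(-c), g z = -∫ z in (0 : ℝ)..c, g z := by
  have h := intervalIntegral.integral_comp_neg (a := 0) (b := c) g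
  simp only [hg_symm, neg_zero] at h
  rw [intervalIntegral.integral_symm, h]

lemma integral_Ioi_neg_of_odd {g : ℝ → ℝ} (hg_symm : ∀ x, g (-x) = -g x) (hg : Integrable g)
    (c : ℝ) : ∫ z in Ioi (-c), g z = ∫ z in Ioi c, g z := by
  have hsymm : ∫ z in (-c)..c, g z = 0 := by
    have h := intervalIntegral.integral_comp_neg (a := -c) (b := c) g
    simp only [hg_symm, intervalIntegral.integral_neg, neg_neg] at h
    linarith
  rw [← intervalIntegral.integral_interval_add_Ioi hg.integrableOn hg.integrableOn, hsymm, zero_add]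

lemma integral_add_mul_of_even (hf_symm : ∀ x, f (-x) = f x) (hf : Integrable f)
    (hf2 : Integrable fun z => z ^ 2 * f z) (c : ℝ) :
    ∫ z, (z + c) * f z = c * ∫ z, f z := by
  simp only [add_mul]
  rw [integral_add (integrable_id_mul_of_integrable_sq_mul hf hf2) (hf.const_mul c),
    integral_id_mul_eq_zero_of_even hf_symm, integral_const_mul, zero_add]

lemma integral_add_sq_mul_of_even (hf_symm : ∀ x, f (-x) = f x) (hf : Integrable f)
    (hf2 : Integrable fun z => z ^ 2 * f z) (c : ℝ) :
    ∫ z, (z + c) ^ 2 * f z = (∫ z, z ^ 2 * f z) + c ^ 2 * ∫ z, f z := by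
  have hpt : ∀ z, (z + c) ^ 2 * f z = z ^ 2 * f z + (2 * c * (z * f z) + c ^ 2 * f z) :=
    fun z => by ring
  have hzf := integrable_id_mul_of_integrable_sq_mul hf hf2
  rw [integral_congr_ae (ae_of_all _ hpt), integral_add hf2 ((hzf.const_mul _).fun_add
    (hf.const_mul _)), integral_add (hzf.const_mul _) (hf.const_mul _), integral_const_mul,
    integral_const_mul, integral_id_mul_eq_zero_of_even hf_symm]
  ring

lemma integral_max_sub_mul_of_even (hf_symm : ∀ x, f (-x) = f x) (hf : Integrable f)
    (hf2 : Integrable fun z => z ^ 2 * f z) (c : ℝ) :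
    ∫ z, max (z - c) 0 * f z
      = (∫ z in Ioi c, z * f z) - c * ((∫ z, f z) / 2 - ∫ z in (0 : ℝ)..c, f z) := by
  have hzf := integrable_id_mul_of_integrable_sq_mul hf hf2
  rw [← setIntegral_eq_integral_of_forall_compl_eq_zero (s := Ioi c) fun z hz => by
      rw [max_eq_right (sub_nonpos.mpr (not_lt.mp hz)), zero_mul],
    setIntegral_congr_fun measurableSet_Ioi fun z hz => by
      rw [max_eq_left (sub_nonneg.mpr (le_of_lt hz)), sub_mul],
    integral_sub hzf.integrableOn (hf.const_mul c).integrableOn, integral_const_mul,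
    integral_Ioi_eq_half_sub_of_even hf_symm hf]

lemma integral_max_sub_sq_mul_of_even (hf_symm : ∀ x, f (-x) = f x) (hf : Integrable f)
    (hf2 : Integrable fun z => z ^ 2 * f z) (c : ℝ) :
    ∫ z, max (z - c) 0 ^ 2 * f z
      = ((∫ z, z ^ 2 * f z) / 2 - ∫ z in (0 : ℝ)..c, z ^ 2 * f z)
        - 2 * c * (∫ z in Ioi c, z * f z) + c ^ 2 * ((∫ z, f z) / 2 - ∫ z in (0 : ℝ)..c, f z) := by
  have hzf := integrable_id_mul_of_integrable_sq_mul hf hf2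
  have hf2_symm : ∀ x, (-x) ^ 2 * f (-x) = x ^ 2 * f x := fun x => by rw [neg_sq, hf_symm]
  have hIoi : ∀ z ∈ Ioi c,
      max (z - c) 0 ^ 2 * f z = z ^ 2 * f z - 2 * c * (z * f z) + c ^ 2 * f z := fun z hz => by
    rw [max_eq_left (sub_nonneg.mpr (le_of_lt hz))]
    ring
  have hpoly : Integrable fun z => z ^ 2 * f z - 2 * c * (z * f z) := hf2.sub (hzf.const_mul _)
  rw [← setIntegral_eq_integral_of_forall_compl_eq_zero (s := Ioi c) fun z hz => by
      rw [max_eq_right (sub_nonpos.mpr (not_lt.mp hz)), sq, zero_mul, zero_mul],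
    setIntegral_congr_fun measurableSet_Ioi hIoi,
    integral_add hpoly.integrableOn (hf.const_mul _).integrableOn,
    integral_sub hf2.integrableOn (hzf.const_mul _).integrableOn, integral_const_mul,
    integral_const_mul, integral_Ioi_eq_half_sub_of_even hf_symm hf,
    integral_Ioi_eq_half_sub_of_even hf2_symm hf2]

lemma integral_abs_add_mul_of_even (hf_symm : ∀ x, f (-x) = f x) (hf : Integrable f)
    (hf2 : Integrable fun z => z ^ 2 * f z) (c : ℝ) :
    ∫ z, |z + c| * f z = 2 * (∫ z in Ioi c, z * f z) + 2 * c * ∫ z in (0 : ℝ)..c, f z := by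
  have hneg : Integrable fun z => max (-z - c) 0 * f z :=
    integrable_mul_of_abs_le (integrable_add_mul hf hf2 c) hf.1 (by fun_prop)
      (abs_max_neg_sub_zero_le c)
  have hpt : ∀ z, |z + c| * f z = (z + c) * f z + 2 * (max (-z - c) 0 * f z) := fun z => by
    rcases le_total 0 (z + c) with h | h
    · rw [abs_of_nonneg h, max_eq_right (by linarith)]; ring
    · rw [abs_of_nonpos h, max_eq_left (by linarith)]; ring
  rw [integral_congr_ae (ae_of_all _ hpt), integral_add (integrable_add_mul hf hf2 c)
    (hneg.const_mul 2), integral_const_mul, integral_add_mul_of_even hf_symm hf hf2,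
    integral_comp_neg_mul_of_even hf_symm fun z => max (z - c) 0,
    integral_max_sub_mul_of_even hf_symm hf hf2]
  ring

lemma integral_add_mul_abs_add_mul_of_even (hf_symm : ∀ x, f (-x) = f x) (hf : Integrable f)
    (hf2 : Integrable fun z => z ^ 2 * f z) (c : ℝ) :
    ∫ z, (z + c) * |z + c| * f z
      = 2 * (∫ z in (0 : ℝ)..c, z ^ 2 * f z) + 4 * c * (∫ z in Ioi c, z * f z)
        + 2 * c ^ 2 * ∫ z in (0 : ℝ)..c, f z := by
  have hneg : Integrable fun z => max (-z - c) 0 ^ 2 * f z :=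
    integrable_mul_of_abs_le (integrable_add_sq_mul hf hf2 c) hf.1 (by fun_prop) fun z => by
      simpa only [abs_pow] using pow_le_pow_left₀ (abs_nonneg _) (abs_max_neg_sub_zero_le c z) 2
  have hpt : ∀ z, (z + c) * |z + c| * f z
      = (z + c) ^ 2 * f z - 2 * (max (-z - c) 0 ^ 2 * f z) := fun z => by
    rcases le_total 0 (z + c) with h | h
    · rw [abs_of_nonneg h, max_eq_right (by linarith)]; ring
    · rw [abs_of_nonpos h, max_eq_left (by linarith)]; ring
  rw [integral_congr_ae (ae_of_all _ hpt), integral_sub (integrable_add_sq_mul hf hf2 c)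
    (hneg.const_mul 2), integral_const_mul, integral_add_sq_mul_of_even hf_symm hf hf2,
    integral_comp_neg_mul_of_even hf_symm fun z => max (z - c) 0 ^ 2,
    integral_max_sub_sq_mul_of_even hf_symm hf hf2]
  ring

end EvenDensity

theorem variance_mul_add_mul_abs_add_of_map_eq_withDensity {Ω : Type*} [MeasurableSpace Ω]
    {μ : Measure Ω} [IsProbabilityMeasure μ] {Z : Ω → ℝ} {f : ℝ → ℝ} (hZ : AEMeasurable Z μ)
    (hdens : μ.map Z = volume.withDensity fun z => ENNReal.ofReal (f z)) (hf_meas : Measurable f)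
    (hf_nonneg : ∀ x, 0 ≤ f x) (hf_total : ∫ z, f z = 1) (hf_symm : ∀ x, f (-x) = f x)
    (hf2 : Integrable fun z => z ^ 2 * f z) (a b c : ℝ) :
    variance (fun ω => a * (Z ω + c) + b * |Z ω + c|) μ
      = (a ^ 2 + b ^ 2) * ((∫ z, z ^ 2 * f z) + c ^ 2)
        + 2 * a * b * (2 * (∫ z in (0 : ℝ)..c, z ^ 2 * f z) + 4 * c * (∫ z in Ioi c, z * f z)
          + 2 * c ^ 2 * ∫ z in (0 : ℝ)..c, f z)
        - (a * c + b * (2 * (∫ z in Ioi c, z * f z) + 2 * c * ∫ z in (0 : ℝ)..c, f z)) ^ 2 := by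
  have hf : Integrable f := .of_integral_ne_zero (by simp [hf_total])
  have htransfer {g : ℝ → ℝ} (hg : Measurable g) : ∫ ω, g (Z ω) ∂μ = ∫ z, g z * f z :=
    integral_comp_eq_integral_mul_of_map_eq_withDensity hZ hdens hf_meas hf_nonneg hg
  have hmem : MemLp (fun ω => Z ω + c) 2 μ :=
    (memLp_two_iff_integrable_sq (by fun_prop)).2 <| integrable_comp_of_map_eq_withDensity hZ
      hdens hf_meas hf_nonneg (g := fun z => (z + c) ^ 2) (by fun_prop)
      (integrable_add_sq_mul hf hf2 c)
  rw [variance_mul_add_mul_abs hmem, htransfer (g := fun z => (z + c) ^ 2) (by fun_prop),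
    htransfer (g := fun z => (z + c) * |z + c|) (by fun_prop),
    htransfer (g := fun z => z + c) (by fun_prop),
    htransfer (g := fun z => |z + c|) (by fun_prop), integral_add_sq_mul_of_even hf_symm hf hf2,
    integral_add_mul_abs_add_mul_of_even hf_symm hf hf2, integral_add_mul_of_even hf_symm hf hf2,
    integral_abs_add_mul_of_even hf_symm hf hf2, hf_total]
  ring

theorem variance_difference_eq_beta_general
    {Ω : Type*} [MeasurableSpace Ω] (μ : Measure Ω) [IsProbabilityMeasure μ]
    (f : ℝ → ℝ) (hf_meas : Measurable f) (hf_nonneg : ∀ x, 0 ≤ f x)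
    (hf_total : ∫ z, f z = 1)
    (hf_symm : ∀ x, f (-x) = f x)
    (Z : Ω → ℝ) (hZ : Measurable Z)
    (hdens : Measure.map Z μ = volume.withDensity (fun z => ENNReal.ofReal (f z)))
    (hmom : Integrable (fun z => z ^ 2 * f z))
    (k₁ k₂ : ℝ)
    (L : ℝ → ℝ) (hL : ∀ z, L z = if 0 ≤ z then k₁ * z else -k₂ * z)
    (β : ℝ → ℝ)
    (hβ : ∀ x : ℝ, β x
        = -(∫ z in Set.Ioi (0:ℝ), z * f z) ^ 2
          + 2 * (∫ z in (0:ℝ)..x, f z) * (∫ z in (0:ℝ)..x, z ^ 2 * f z)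
          + 4 * x * (∫ z in (0:ℝ)..x, f z) * (∫ z in Set.Ioi x, z * f z)
          - x ^ 2 / 4
          + (∫ z in Set.Ioi x, z * f z) ^ 2
          + x ^ 2 * (∫ z in (0:ℝ)..x, f z) ^ 2)
    (C : ℝ)
    (hC : (k₁ - k₂) / 2
        + (if 0 ≤ C then (1:ℝ) else -1) * (k₁ + k₂) * (∫ z in (0:ℝ)..|C|, f z) = 0) :
    variance (fun ω => L (Z ω)) μ - variance (fun ω => L (Z ω + C)) μ
      = (k₁ + k₂) ^ 2 * β |C| := by
  obtain rfl : L = fun w => (k₁ - k₂) / 2 * w + (k₁ + k₂) / 2 * |w| :=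
    funext fun w => (hL w).trans (ite_nonneg_mul_eq_mul_add_mul_abs k₁ k₂ w)
  have hvar := variance_mul_add_mul_abs_add_of_map_eq_withDensity hZ.aemeasurable hdens hf_meas
    hf_nonneg hf_total hf_symm hmom ((k₁ - k₂) / 2) ((k₁ + k₂) / 2)
  have hvar0 := hvar 0
  simp only [add_zero, intervalIntegral.integral_same, mul_zero, zero_mul] at hvar0
  rw [hvar0, hvar C, hβ]
  rcases le_or_gt 0 C with hC0 | hC0
  · rw [if_pos hC0, abs_of_nonneg hC0] at hC
    rw [abs_of_nonneg hC0]
    linear_combination (-(k₁ + k₂) * (2 * (∫ z in (0 : ℝ)..C, z ^ 2 * f z)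
      + 2 * C * ∫ z in Set.Ioi C, z * f z)) * hC
  · obtain ⟨c, hc, rfl⟩ : ∃ c, 0 < c ∧ C = -c := ⟨-C, by linarith, by ring⟩
    have hzf : Integrable fun z => z * f z :=
      integrable_id_mul_of_integrable_sq_mul (.of_integral_ne_zero (by simp [hf_total])) hmom
    rw [if_neg (by linarith), abs_neg, abs_of_pos hc] at hC
    rw [abs_neg, abs_of_pos hc, intervalIntegral_zero_neg_of_even hf_symm,
      intervalIntegral_zero_neg_of_even (g := fun z => z ^ 2 * f z) (by simp [hf_symm]),
      integral_Ioi_neg_of_odd (g := fun z => z * f z) (by simp [hf_symm]) hzf]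
    linear_combination ((k₁ + k₂) * (2 * (∫ z in (0 : ℝ)..c, z ^ 2 * f z)
      + 2 * c * ∫ z in Set.Ioi c, z * f z)) * hC

/-- With `β` as in the paper and `C` satisfying
`(k₁ − k₂)/2 + sgn(C)(k₁ + k₂) ∫₀^{|C|} f = 0`, one has
`Var[L(Z)] − Var[L(Z + C)] = (k₁ + k₂)² β(|C|)`. -/
theorem variance_difference_eq_beta
    {Ω : Type*} [MeasurableSpace Ω] (μ : Measure Ω) [IsProbabilityMeasure μ]
    (f : ℝ → ℝ) (hf_meas : Measurable f) (hf_nonneg : ∀ x, 0 ≤ f x)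
    (hf_total : ∫ z, f z = 1)
    (hf_symm : ∀ x, f (-x) = f x)
    (hf_mono : ∀ x y : ℝ, 0 ≤ x → x ≤ y → f y ≤ f x)
    (Z : Ω → ℝ) (hZ : Measurable Z)
    (hdens : Measure.map Z μ = volume.withDensity (fun z => ENNReal.ofReal (f z)))
    (hmom : Integrable (fun z => z ^ 2 * f z))
    (k₁ k₂ : ℝ) (hk₁ : 0 < k₁) (hk₂ : 0 < k₂)
    (L : ℝ → ℝ) (hL : ∀ z, L z = if 0 ≤ z then k₁ * z else -k₂ * z)
    (β : ℝ → ℝ)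
    (hβ : ∀ x : ℝ, β x
        = -(∫ z in Set.Ioi (0:ℝ), z * f z) ^ 2
          + 2 * (∫ z in (0:ℝ)..x, f z) * (∫ z in (0:ℝ)..x, z ^ 2 * f z)
          + 4 * x * (∫ z in (0:ℝ)..x, f z) * (∫ z in Set.Ioi x, z * f z)
          - x ^ 2 / 4
          + (∫ z in Set.Ioi x, z * f z) ^ 2
          + x ^ 2 * (∫ z in (0:ℝ)..x, f z) ^ 2)
    (C : ℝ)
    (hC : (k₁ - k₂) / 2
        + (if 0 ≤ C then (1:ℝ) else -1) * (k₁ + k₂) * (∫ z in (0:ℝ)..|C|, f z) = 0) :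
    variance (fun ω => L (Z ω)) μ - variance (fun ω => L (Z ω + C)) μ
      = (k₁ + k₂) ^ 2 * β |C| :=
  variance_difference_eq_beta_general μ f hf_meas hf_nonneg hf_total hf_symm Z hZ hdens hmom k₁ k₂ L
    hL β hβ C hC
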